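/- arXiv:2104.13405 — 2 statements merged into one kernel-verified Lean document; each statement's English description precedes it below -/
import Mathlib

section
/- The function β(c) := (8π/27) · (Σ_{k=1}^∞ e^{−ck}/k³)⁴ / (Σ_{k=1}^∞ e^{−ck}/k⁴)³ is strictly decreasing on (0, ∞). -/
/-!
Write `Sₙ(c) = ∑_{k ≥ 1} e^{-ck} / kⁿ`. Termwise differentiation gives `Sₙ₊₁' = -Sₙ`, and
Cauchy–Schwarz with `(e^{-ck}/k^{n+1})² = (e^{-ck}/kⁿ)(e^{-ck}/k^{n+2})` gives
`Sₙ₊₁² ≤ Sₙ Sₙ₊₂`, so `(Sₙ₊₁/Sₙ₊₂)' = (Sₙ₊₁² - Sₙ Sₙ₊₂)/Sₙ₊₂² ≤ 0`. Hence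
`β = (8π/27) (S₃/S₄)³ · S₃` is a positive nonincreasing factor times the positive strictly
decreasing `S₃`.
-/

open Real

theorem tsum_sq_le_tsum_mul_tsum_of_sq_le_mul {ι : Type*} {r f g : ι → ℝ}
    (hf : Summable f) (hg : Summable g) (hf₀ : ∀ i, 0 ≤ f i) (hg₀ : ∀ i, 0 ≤ g i)
    (hrfg : ∀ i, r i ^ 2 ≤ f i * g i) :
    (∑' i, r i) ^ 2 ≤ (∑' i, f i) * ∑' i, g i := by
  by_cases hr : Summable r
  · refine le_of_tendsto' (hr.hasSum.pow 2) fun s => ?_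
    calc (∑ i ∈ s, r i) ^ 2 ≤ (∑ i ∈ s, f i) * ∑ i ∈ s, g i :=
          Finset.sum_sq_le_sum_mul_sum_of_sq_le_mul s (fun i _ => hf₀ i) (fun i _ => hg₀ i)
            fun i _ => hrfg i
      _ ≤ (∑' i, f i) * ∑' i, g i :=
          mul_le_mul (hf.sum_le_tsum s fun i _ => hf₀ i) (hg.sum_le_tsum s fun i _ => hg₀ i)
            (Finset.sum_nonneg fun i _ => hg₀ i) (tsum_nonneg hf₀)
  · rw [tsum_eq_zero_of_not_summable hr, sq, zero_mul]
    exact mul_nonneg (tsum_nonneg hf₀) (tsum_nonneg hg₀)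

theorem AntitoneOn.mul_strictAntiOn_of_pos {s : Set ℝ} {f g : ℝ → ℝ} (hf : AntitoneOn f s)
    (hg : StrictAntiOn g s) (hf₀ : ∀ x ∈ s, 0 < f x) (hg₀ : ∀ x ∈ s, 0 ≤ g x) :
    StrictAntiOn (fun x => f x * g x) s := fun x hx y hy hxy =>
  calc f y * g y < f y * g x := mul_lt_mul_of_pos_left (hg hx hy hxy) (hf₀ y hy)
    _ ≤ f x * g x := mul_le_mul_of_nonneg_right (hf hx hy hxy.le) (hg₀ x hx)

/-- The polylogarithm `Liₙ(e^{-c}) = ∑_{k ≥ 1} e^{-ck} / kⁿ`. -/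
noncomputable def polylogExpNeg (n : ℕ) (c : ℝ) : ℝ :=
  ∑' k : ℕ, exp (-c * ((k : ℝ) + 1)) / ((k : ℝ) + 1) ^ n

theorem exp_div_pow_le_exp (n : ℕ) (c : ℝ) (k : ℕ) :
    exp (-c * ((k : ℝ) + 1)) / ((k : ℝ) + 1) ^ n ≤ exp (-c * ((k : ℝ) + 1)) :=
  div_le_self (exp_pos _).le (one_le_pow₀ (by linarith [k.cast_nonneg (α := ℝ)]))

theorem summable_exp_neg_mul_succ {c : ℝ} (hc : 0 < c) :
    Summable fun k : ℕ => exp (-c * ((k : ℝ) + 1)) :=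
  summable_exp_nat_mul_of_ge (neg_neg_of_pos hc) fun k => by linarith

theorem summable_polylogExpNeg (n : ℕ) {c : ℝ} (hc : 0 < c) :
    Summable fun k : ℕ => exp (-c * ((k : ℝ) + 1)) / ((k : ℝ) + 1) ^ n :=
  (summable_exp_neg_mul_succ hc).of_nonneg_of_le (fun _ => by positivity)
    (exp_div_pow_le_exp n c)

theorem polylogExpNeg_pos (n : ℕ) {c : ℝ} (hc : 0 < c) : 0 < polylogExpNeg n c :=
  (summable_polylogExpNeg n hc).tsum_pos (fun _ => by positivity) 0 (by positivity)

theorem strictAntiOn_polylogExpNeg (n : ℕ) : StrictAntiOn (polylogExpNeg n) (Set.Ioi 0) := by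
  intro c hc d hd hcd
  exact Summable.tsum_lt_tsum (i := 0) (fun k => by gcongr) (by gcongr)
    (summable_polylogExpNeg n hd) (summable_polylogExpNeg n hc)

theorem hasDerivAt_exp_neg_mul_div_pow (n k : ℕ) (c : ℝ) :
    HasDerivAt (fun x : ℝ => exp (-x * ((k : ℝ) + 1)) / ((k : ℝ) + 1) ^ (n + 1))
      (-(exp (-c * ((k : ℝ) + 1)) / ((k : ℝ) + 1) ^ n)) c := by
  refine ((((hasDerivAt_neg c).mul_const ((k : ℝ) + 1)).exp).div_const
    (((k : ℝ) + 1) ^ (n + 1))).congr_deriv ?_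
  field_simp
  ring

theorem hasDerivAt_polylogExpNeg_succ (n : ℕ) {c : ℝ} (hc : 0 < c) :
    HasDerivAt (polylogExpNeg (n + 1)) (-polylogExpNeg n c) c := by
  rw [polylogExpNeg, ← tsum_neg]
  refine hasDerivAt_tsum_of_isPreconnected (summable_exp_neg_mul_succ (half_pos hc))
    isOpen_Ioi isPreconnected_Ioi (fun k y _ => hasDerivAt_exp_neg_mul_div_pow n k y)
    (fun k y hy => ?_) (half_lt_self hc) (summable_polylogExpNeg (n + 1) hc) (half_lt_self hc)
  rw [norm_neg, norm_of_nonneg (by positivity)]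
  refine (exp_div_pow_le_exp n y k).trans (exp_le_exp.mpr ?_)
  have : c / 2 < y := hy
  nlinarith [k.cast_nonneg (α := ℝ)]

theorem sq_polylogExpNeg_succ_le (n : ℕ) {c : ℝ} (hc : 0 < c) :
    polylogExpNeg (n + 1) c ^ 2 ≤ polylogExpNeg n c * polylogExpNeg (n + 2) c := by
  refine tsum_sq_le_tsum_mul_tsum_of_sq_le_mul (summable_polylogExpNeg n hc)
    (summable_polylogExpNeg (n + 2) hc) (fun _ => by positivity) (fun _ => by positivity)
    fun k => le_of_eq ?_
  rw [div_pow, ← exp_nat_mul, div_mul_div_comm, ← exp_add, ← pow_mul, ← pow_add]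
  congr 2 <;> ring

theorem antitoneOn_polylogExpNeg_succ_div (n : ℕ) :
    AntitoneOn (fun c => polylogExpNeg (n + 1) c / polylogExpNeg (n + 2) c) (Set.Ioi 0) := by
  have hderiv : ∀ c ∈ Set.Ioi (0 : ℝ), HasDerivAt
      (fun c => polylogExpNeg (n + 1) c / polylogExpNeg (n + 2) c)
      ((polylogExpNeg (n + 1) c ^ 2 - polylogExpNeg n c * polylogExpNeg (n + 2) c) /
        polylogExpNeg (n + 2) c ^ 2) c := fun c hc =>
    ((hasDerivAt_polylogExpNeg_succ n hc).div (hasDerivAt_polylogExpNeg_succ (n + 1) hc)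
      (polylogExpNeg_pos _ hc).ne').congr_deriv (by ring)
  refine antitoneOn_of_deriv_nonpos (convex_Ioi 0)
    (fun c hc => (hderiv c hc).continuousAt.continuousWithinAt) ?_ ?_ <;> rw [interior_Ioi]
  · exact fun c hc => (hderiv c hc).differentiableAt.differentiableWithinAt
  · intro c hc
    rw [(hderiv c hc).deriv]
    exact div_nonpos_of_nonpos_of_nonneg (sub_nonpos.mpr (sq_polylogExpNeg_succ_le n hc))
      (sq_nonneg _)

theorem stmt2 :
    StrictAntiOn (fun c : ℝ =>
      (8 * π / 27) *
        (∑' k : ℕ, Real.exp (-c * ((k : ℝ) + 1)) / ((k : ℝ) + 1) ^ 3) ^ 4 /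
        (∑' k : ℕ, Real.exp (-c * ((k : ℝ) + 1)) / ((k : ℝ) + 1) ^ 4) ^ 3)
      (Set.Ioi (0 : ℝ)) := by
  have hratio : AntitoneOn (fun c => 8 * π / 27 * (polylogExpNeg 3 c / polylogExpNeg 4 c) ^ 3)
      (Set.Ioi 0) := fun c hc d hd hcd => by
    have hdec := antitoneOn_polylogExpNeg_succ_div 2 hc hd hcd
    have hpos := div_pos (polylogExpNeg_pos 3 hd) (polylogExpNeg_pos 4 hd)
    dsimp only
    gcongr
  have hβ := hratio.mul_strictAntiOn_of_pos (strictAntiOn_polylogExpNeg 3)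
    (fun c hc => by
      have h₃ := polylogExpNeg_pos 3 hc
      have h₄ := polylogExpNeg_pos 4 hc
      positivity)
    fun c hc => (polylogExpNeg_pos 3 hc).le
  convert hβ using 2 with c
  simp only [polylogExpNeg]
  ring
end

section
/- Suppose F : ℝ³ → ℝ is integrable, nonnegative, not a.e. zero, with ∫ F dv = ∫ J⁰ dv and ∫ |v|F dv = ∫ |v|J⁰ dv where J⁰(v) = 1/(e^{1+|v|} − 1). If c > 0 and γ > 0 satisfy γ³ ∫_{ℝ³} (e^{c+|v|} − 1)^{−1} dv = ∫ F dv and γ⁴ ∫_{ℝ³} |v|(e^{c+|v|} − 1)^{−1} dv = ∫ |v|F dv, then c = 1 and γ = 1. -/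
/-!
Write `A(c) = ∫ (e^{c+|v|} - 1)⁻¹ dv` and `B(c) = ∫ |v| (e^{c+|v|} - 1)⁻¹ dv`. The hypotheses say
`γ³ A(c) = A(1)` and `γ⁴ B(c) = B(1)`, so eliminating `γ` gives `A(c)⁴ / B(c)³ = A(1)⁴ / B(1)³`.
Now `A⁴ / B³ = A · (A / B)³` is strictly decreasing on `(0, ∞)`: `A` is strictly decreasing, and
`B / A` is nondecreasing by a Chebyshev-type inequality, because for `a ≤ b` the ratio of the
Bose–Einstein factors `(e^{b+x} - 1)⁻¹ / (e^{a+x} - 1)⁻¹` increases with `x`. Hence `c = 1`, and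
then `γ³ = 1`.
-/

open MeasureTheory Real Set Module

/-- Chebyshev's integral inequality: if `f / g` increases along `w`, the `w`-mean of `g` is at most
the `w`-mean of `f`. Integrate `(w y - w x) (f x g y - g x f y) ≤ 0` over `μ ⊗ μ`. -/
theorem integral_mul_integral_mul_le_of_ratio_monovary {α : Type*} [MeasurableSpace α]
    {μ : Measure α} [SFinite μ] {f g w : α → ℝ} (hf : Integrable f μ) (hg : Integrable g μ)
    (hwf : Integrable (fun x ↦ w x * f x) μ) (hwg : Integrable (fun x ↦ w x * g x) μ)
    (h : ∀ x y, w x ≤ w y → f x * g y ≤ g x * f y) :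
    (∫ x, f x ∂μ) * ∫ x, w x * g x ∂μ ≤ (∫ x, g x ∂μ) * ∫ x, w x * f x ∂μ := by
  have hpt : ∀ p : α × α, (w p.2 - w p.1) * (f p.1 * g p.2 - g p.1 * f p.2) ≤ 0 := by
    rintro ⟨x, y⟩
    rcases le_total (w x) (w y) with hxy | hyx
    · exact mul_nonpos_of_nonneg_of_nonpos (by linarith) (by linarith [h x y hxy])
    · exact mul_nonpos_of_nonpos_of_nonneg (by linarith) (by linarith [h y x hyx])
  have hsplit : ∀ p : α × α, (w p.2 - w p.1) * (f p.1 * g p.2 - g p.1 * f p.2) =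
      f p.1 * (w p.2 * g p.2) - g p.1 * (w p.2 * f p.2) - (w p.1 * f p.1) * g p.2
        + (w p.1 * g p.1) * f p.2 := fun p ↦ by ring
  have i₁ : Integrable (fun p : α × α ↦ f p.1 * (w p.2 * g p.2)) (μ.prod μ) := hf.mul_prod hwg
  have i₂ : Integrable (fun p : α × α ↦ g p.1 * (w p.2 * f p.2)) (μ.prod μ) := hg.mul_prod hwf
  have i₃ : Integrable (fun p : α × α ↦ (w p.1 * f p.1) * g p.2) (μ.prod μ) := hwf.mul_prod hg
  have i₄ : Integrable (fun p : α × α ↦ (w p.1 * g p.1) * f p.2) (μ.prod μ) := hwg.mul_prod hf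
  have i₁₂ : Integrable (fun p : α × α ↦ f p.1 * (w p.2 * g p.2) - g p.1 * (w p.2 * f p.2))
    (μ.prod μ) := i₁.sub i₂
  have i₁₂₃ : Integrable (fun p : α × α ↦ f p.1 * (w p.2 * g p.2) - g p.1 * (w p.2 * f p.2)
    - (w p.1 * f p.1) * g p.2) (μ.prod μ) := i₁₂.sub i₃
  have hint := integral_nonpos (μ := μ.prod μ) hpt
  simp only [hsplit] at hint
  rw [integral_add i₁₂₃ i₄, integral_sub i₁₂ i₃, integral_sub i₁ i₂,
    integral_prod_mul f (fun y ↦ w y * g y), integral_prod_mul g (fun y ↦ w y * f y),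
    integral_prod_mul (fun x ↦ w x * f x) g, integral_prod_mul (fun x ↦ w x * g x) f] at hint
  linarith

lemma one_add_pow_le_pow_mul_exp {x : ℝ} (hx : 0 ≤ x) (n : ℕ) :
    (1 + x) ^ n ≤ (n : ℝ) ^ n * exp x := by
  rcases n.eq_zero_or_pos with rfl | hn
  · simpa using one_le_exp hx
  have hn' : (0 : ℝ) < n := Nat.cast_pos.2 hn
  have hlin : 1 + x ≤ n * exp (x / n) := by
    have := add_one_le_exp (x / n)
    have h1 : (1 : ℝ) ≤ n := Nat.one_le_cast.2 hn
    calc 1 + x ≤ n * (x / n + 1) := by field_simp; linarith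
      _ ≤ n * exp (x / n) := by gcongr
  calc (1 + x) ^ n ≤ (n * exp (x / n)) ^ n := by gcongr
    _ = (n : ℝ) ^ n * exp x := by rw [mul_pow, ← exp_nat_mul, mul_div_cancel₀ _ hn'.ne']

noncomputable def boseEinstein (c x : ℝ) : ℝ := (exp (c + x) - 1)⁻¹

lemma boseEinstein_pos {c x : ℝ} (h : 0 < c + x) : 0 < boseEinstein c x :=
  inv_pos.2 (sub_pos.2 (one_lt_exp_iff.2 h))

lemma boseEinstein_lt_of_lt {a b x : ℝ} (h : 0 < a + x) (hab : a < b) :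
    boseEinstein b x < boseEinstein a x :=
  inv_strictAnti₀ (sub_pos.2 (one_lt_exp_iff.2 h)) (by gcongr)

lemma boseEinstein_mul_boseEinstein_le {a b r s : ℝ} (h : 0 < a + r) (hab : a ≤ b)
    (hrs : r ≤ s) : boseEinstein b r * boseEinstein a s ≤ boseEinstein a r * boseEinstein b s := by
  have hpos : ∀ c x, a ≤ c → r ≤ x → 0 < exp (c + x) - 1 := fun c x hc hx ↦
    sub_pos.2 (one_lt_exp_iff.2 (by linarith))
  simp only [boseEinstein, ← mul_inv]
  refine inv_anti₀ (mul_pos (hpos _ _ le_rfl le_rfl) (hpos _ _ hab hrs)) ?_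
  have key : 0 ≤ (exp b - exp a) * (exp s - exp r) :=
    mul_nonneg (sub_nonneg.2 (exp_le_exp.2 hab)) (sub_nonneg.2 (exp_le_exp.2 hrs))
  simp only [exp_add]
  nlinarith

lemma boseEinstein_le_mul_exp_neg {c x : ℝ} (hc : 0 < c) (hx : 0 ≤ x) :
    boseEinstein c x ≤ (exp c - 1)⁻¹ * exp (-x) := by
  rw [exp_neg, ← mul_inv, boseEinstein]
  refine inv_anti₀ (mul_pos (sub_pos.2 (one_lt_exp_iff.2 hc)) (exp_pos x)) ?_
  rw [exp_add]
  nlinarith [one_le_exp hx]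

noncomputable def boseMoment {E : Type*} [NormedAddCommGroup E] [MeasurableSpace E]
    (μ : Measure E) (j : ℕ) (c : ℝ) : ℝ :=
  ∫ v, ‖v‖ ^ j * boseEinstein c ‖v‖ ∂μ

theorem continuous_boseEinstein_norm {E : Type*} [SeminormedAddCommGroup E] {c : ℝ}
    (hc : 0 < c) : Continuous fun v : E ↦ boseEinstein c ‖v‖ :=
  ((continuous_const.add continuous_norm).rexp.sub continuous_const).inv₀ fun v ↦
    (sub_pos.2 (one_lt_exp_iff.2 (by positivity : 0 < c + ‖v‖))).ne'

section Moments

variable {E : Type*} [NormedAddCommGroup E] [NormedSpace ℝ E] [FiniteDimensional ℝ E]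
  [MeasurableSpace E] [BorelSpace E] (μ : Measure E) [μ.IsAddHaarMeasure]

theorem integrable_norm_pow_mul_boseEinstein {c : ℝ} (hc : 0 < c) (j : ℕ) :
    Integrable (fun v : E ↦ ‖v‖ ^ j * boseEinstein c ‖v‖) μ := by
  set d := finrank ℝ E
  set n := j + d + 1
  have hdom : Integrable (fun v : E ↦ (1 + ‖v‖) ^ (-(d + 1 : ℝ))) μ :=
    integrable_one_add_norm (by linarith)
  refine (hdom.const_mul ((exp c - 1)⁻¹ * (n : ℝ) ^ n)).mono'
    (by unfold boseEinstein; fun_prop) (ae_of_all _ fun v ↦ ?_)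
  set x := ‖v‖
  have hx : 0 ≤ x := norm_nonneg v
  have hx1 : 0 < 1 + x := by linarith
  have hrpow : (1 + x) ^ (-(d + 1 : ℝ)) = ((1 + x) ^ (d + 1))⁻¹ := by
    rw [rpow_neg hx1.le, ← Nat.cast_add_one, rpow_natCast]
  have hpoly : (1 + x) ^ n ≤ (n : ℝ) ^ n * exp x := one_add_pow_le_pow_mul_exp hx n
  have hbose := boseEinstein_le_mul_exp_neg hc hx
  have hec : 0 < exp c - 1 := sub_pos.2 (one_lt_exp_iff.2 hc)
  rw [Real.norm_of_nonneg (mul_nonneg (pow_nonneg hx j) (boseEinstein_pos (by linarith)).le),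
    hrpow]
  calc x ^ j * boseEinstein c x ≤ (1 + x) ^ j * ((exp c - 1)⁻¹ * exp (-x)) := by
        gcongr
        · exact (boseEinstein_pos (by linarith)).le
        · linarith
    _ ≤ (exp c - 1)⁻¹ * (n : ℝ) ^ n * ((1 + x) ^ (d + 1))⁻¹ := by
        rw [exp_neg]
        have : (1 + x) ^ n = (1 + x) ^ j * (1 + x) ^ (d + 1) := by rw [← pow_add, ← add_assoc]
        rw [this] at hpoly
        field_simp
        nlinarith [exp_pos x, pow_pos hx1 j]

theorem boseMoment_pos [Nontrivial E] {c : ℝ} (hc : 0 < c) (j : ℕ) : 0 < boseMoment μ j c := by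
  obtain ⟨v, hv⟩ := exists_ne (0 : E)
  have hpos : ∀ w : E, 0 ≤ ‖w‖ ^ j * boseEinstein c ‖w‖ := fun w ↦
    mul_nonneg (by positivity) (boseEinstein_pos (by positivity)).le
  refine integral_pos_of_integrable_nonneg_nonzero (x := v) ?_
    (integrable_norm_pow_mul_boseEinstein μ hc j) hpos ?_
  · exact (continuous_norm.pow j).mul (continuous_boseEinstein_norm hc)
  · exact (mul_pos (pow_pos (norm_pos_iff.2 hv) j) (boseEinstein_pos (by positivity))).ne'

theorem boseMoment_zero_strictAntiOn : StrictAntiOn (boseMoment μ 0) (Ioi 0) := by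
  intro a (ha : 0 < a) b (hb : 0 < b) hab
  have hint : ∀ c, 0 < c → Integrable (fun v : E ↦ boseEinstein c ‖v‖) μ := fun c hc ↦ by
    simpa using integrable_norm_pow_mul_boseEinstein μ hc 0
  have hlt : ∀ v : E, boseEinstein b ‖v‖ < boseEinstein a ‖v‖ := fun v ↦
    boseEinstein_lt_of_lt (by positivity) hab
  simp only [boseMoment, pow_zero, one_mul]
  rw [← sub_pos, ← integral_sub (hint a ha) (hint b hb)]
  exact integral_pos_of_integrable_nonneg_nonzero (x := 0)
    ((continuous_boseEinstein_norm ha).sub (continuous_boseEinstein_norm hb))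
    ((hint a ha).sub (hint b hb)) (fun v ↦ sub_nonneg.2 (hlt v).le) (sub_pos.2 (hlt 0)).ne'

theorem boseMoment_zero_mul_boseMoment_one_le {a b : ℝ} (ha : 0 < a) (hab : a ≤ b) :
    boseMoment μ 0 b * boseMoment μ 1 a ≤ boseMoment μ 0 a * boseMoment μ 1 b := by
  have hb : 0 < b := ha.trans_le hab
  have h := integral_mul_integral_mul_le_of_ratio_monovary (μ := μ) (w := fun v ↦ ‖v‖)
    (f := fun v ↦ boseEinstein b ‖v‖) (g := fun v ↦ boseEinstein a ‖v‖)
    (by simpa using integrable_norm_pow_mul_boseEinstein μ hb 0)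
    (by simpa using integrable_norm_pow_mul_boseEinstein μ ha 0)
    (by simpa using integrable_norm_pow_mul_boseEinstein μ hb 1)
    (by simpa using integrable_norm_pow_mul_boseEinstein μ ha 1)
    fun v w hvw ↦ boseEinstein_mul_boseEinstein_le (by positivity) hab hvw
  simpa [boseMoment] using h

theorem boseMoment_pow_div_strictAntiOn [Nontrivial E] (n : ℕ) :
    StrictAntiOn (fun c ↦ boseMoment μ 0 c ^ (n + 1) / boseMoment μ 1 c ^ n) (Ioi 0) := by
  intro a (ha : 0 < a) b (hb : 0 < b) hab
  have hA := boseMoment_zero_strictAntiOn μ ha hb hab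
  have hAB := boseMoment_zero_mul_boseMoment_one_le μ ha hab.le
  have hA₀ := boseMoment_pos μ ha 0
  have hB₀ := boseMoment_pos μ ha 1
  have hA₁ := boseMoment_pos μ hb 0
  have hB₁ := boseMoment_pos μ hb 1
  rw [div_lt_div_iff₀ (by positivity) (by positivity)]
  calc boseMoment μ 0 b ^ (n + 1) * boseMoment μ 1 a ^ n
      = boseMoment μ 0 b * (boseMoment μ 0 b * boseMoment μ 1 a) ^ n := by ring
    _ ≤ boseMoment μ 0 b * (boseMoment μ 0 a * boseMoment μ 1 b) ^ n := by gcongr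
    _ < boseMoment μ 0 a * (boseMoment μ 0 a * boseMoment μ 1 b) ^ n := by gcongr
    _ = boseMoment μ 0 a ^ (n + 1) * boseMoment μ 1 b ^ n := by ring

end Moments

theorem stmt14_general (F : EuclideanSpace ℝ (Fin 3) → ℝ)
    (h1 : ∫ v, F v = ∫ v : EuclideanSpace ℝ (Fin 3), 1 / (Real.exp (1 + ‖v‖) - 1))
    (h2 : ∫ v : EuclideanSpace ℝ (Fin 3), ‖v‖ * F v =
      ∫ v : EuclideanSpace ℝ (Fin 3), ‖v‖ / (Real.exp (1 + ‖v‖) - 1))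
    (c γ : ℝ) (hc : 0 < c) (hγ : 0 < γ)
    (hg1 : γ ^ 3 * ∫ v : EuclideanSpace ℝ (Fin 3), (Real.exp (c + ‖v‖) - 1)⁻¹ =
      ∫ v, F v)
    (hg2 : γ ^ 4 * ∫ v : EuclideanSpace ℝ (Fin 3), ‖v‖ * (Real.exp (c + ‖v‖) - 1)⁻¹ =
      ∫ v : EuclideanSpace ℝ (Fin 3), ‖v‖ * F v) :
    c = 1 ∧ γ = 1 := by
  set μ : Measure (EuclideanSpace ℝ (Fin 3)) := volume
  have hA : γ ^ 3 * boseMoment μ 0 c = boseMoment μ 0 1 := by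
    simpa [boseMoment, boseEinstein, h1] using hg1
  have hB : γ ^ 4 * boseMoment μ 1 c = boseMoment μ 1 1 := by
    simpa [boseMoment, boseEinstein, h2, div_eq_mul_inv] using hg2
  have hc1 : c = 1 := by
    refine (boseMoment_pow_div_strictAntiOn μ 3).injOn hc (mem_Ioi.2 one_pos) ?_
    simp only [← hA, ← hB]
    field_simp
    ring
  subst hc1
  refine ⟨rfl, (pow_eq_one_iff_of_nonneg hγ.le three_ne_zero).1 ?_⟩
  exact mul_right_cancel₀ (boseMoment_pos μ one_pos 0).ne' (by rw [hA, one_mul])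

theorem stmt14 (F : EuclideanSpace ℝ (Fin 3) → ℝ) (hF : Integrable F)
    (hpos : ∀ v, 0 ≤ F v) (hne : ¬ (F =ᵐ[volume] 0))
    (h1 : ∫ v, F v = ∫ v : EuclideanSpace ℝ (Fin 3), 1 / (Real.exp (1 + ‖v‖) - 1))
    (h2 : ∫ v : EuclideanSpace ℝ (Fin 3), ‖v‖ * F v =
      ∫ v : EuclideanSpace ℝ (Fin 3), ‖v‖ / (Real.exp (1 + ‖v‖) - 1))
    (c γ : ℝ) (hc : 0 < c) (hγ : 0 < γ)
    (hg1 : γ ^ 3 * ∫ v : EuclideanSpace ℝ (Fin 3), (Real.exp (c + ‖v‖) - 1)⁻¹ =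
      ∫ v, F v)
    (hg2 : γ ^ 4 * ∫ v : EuclideanSpace ℝ (Fin 3), ‖v‖ * (Real.exp (c + ‖v‖) - 1)⁻¹ =
      ∫ v : EuclideanSpace ℝ (Fin 3), ‖v‖ * F v) :
    c = 1 ∧ γ = 1 :=
  stmt14_general F h1 h2 c γ hc hγ hg1 hg2
end
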